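/- For every real κ with 1 < κ < 4, the five subsets of ℝ² forming the standard pyramidal disk packing have pairwise disjoint interiors; moreover d₁ intersects each of d_x, d₂, d₋₂ in exactly one point, d₂ intersects each of d_x, d₋₁ in exactly one point, d₋₂ intersects each of d_x, d₋₁ in exactly one point, and d₁ ∩ d₋₁ = ∅, d₂ ∩ d₋₂ = ∅, d_x ∩ d₋₁ = ∅. (Thus the sets form a disk packing in ℝ² with tangency pattern the square-pyramid graph ⊠.) -/

import Mathlib

/-!
Every contact in the packing is a tangency of one of two kinds. Two closed balls in a strictly
convex space whose centres are at distance the sum of the radii meet only at the point dividing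
the segment of centres in the ratio of the radii (the equality case of the triangle inequality);
a closed ball of radius `r` about `x` meets the half-space `⟪u, p⟫ ≤ ⟪u, x⟫ - r` (`‖u‖ = 1`)
only at `x - r • u`. The ball–ball tangencies come from
`(2/√κ)² + (1/κ - 1)² = (1/κ + 1)²`, and `κ < 4` keeps `d₂, d₋₂` apart since `4/√κ > 2`.
Finally, every two of the five sets meet in at most one point, and a point has empty interior
in the plane, so the interiors are pairwise disjoint.
-/

noncomputable section

open Metric

/-- The half-plane `{(x,y) : y ≤ −1}`. -/
def dx : Set (EuclideanSpace ℝ (Fin 2)) := {p | p 1 ≤ -1}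

/-- The half-plane `{(x,y) : y ≥ 1}`. -/
def dm1 : Set (EuclideanSpace ℝ (Fin 2)) := {p | 1 ≤ p 1}

/-- The closed disk of radius `1/κ` centered at `(0, 1/κ − 1)`. -/
def d1 (κ : ℝ) : Set (EuclideanSpace ℝ (Fin 2)) :=
  closedBall (WithLp.toLp 2 ![0, 1 / κ - 1] : EuclideanSpace ℝ (Fin 2)) (1 / κ)

/-- The closed unit disk centered at `(2/√κ, 0)`. -/
def d2 (κ : ℝ) : Set (EuclideanSpace ℝ (Fin 2)) :=
  closedBall (WithLp.toLp 2 ![2 / Real.sqrt κ, 0] : EuclideanSpace ℝ (Fin 2)) 1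

/-- The closed unit disk centered at `(−2/√κ, 0)`. -/
def dm2 (κ : ℝ) : Set (EuclideanSpace ℝ (Fin 2)) :=
  closedBall (WithLp.toLp 2 ![-(2 / Real.sqrt κ), 0] : EuclideanSpace ℝ (Fin 2)) 1

/-- The five disks of the standard pyramidal disk packing, as a family. -/
def packing (κ : ℝ) : Fin 5 → Set (EuclideanSpace ℝ (Fin 2)) :=
  ![dx, d1 κ, d2 κ, dm1, dm2 κ]

open Topology

theorem existsUnique_mem_closedBall_and_mem_closedBall_of_dist_eq_add {E : Type*}
    [NormedAddCommGroup E] [NormedSpace ℝ E] [StrictConvexSpace ℝ E] {x z : E} {r s : ℝ}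
    (hr : 0 ≤ r) (hs : 0 ≤ s) (hxz : dist x z = r + s) :
    ∃! y, y ∈ closedBall x r ∧ y ∈ closedBall z s := by
  have hr' : r / (r + s) * dist x z = r := by
    rw [hxz]; exact div_mul_cancel_of_imp fun h => by linarith
  have hs' : (1 - r / (r + s)) * dist x z = s := by rw [sub_mul, hr', one_mul, hxz]; ring
  refine ⟨AffineMap.lineMap x z (r / (r + s)), ⟨?_, ?_⟩, ?_⟩
  · rw [mem_closedBall, dist_lineMap_left, Real.norm_of_nonneg (by positivity), hr']
  · rw [mem_closedBall, dist_lineMap_right,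
      Real.norm_of_nonneg (sub_nonneg.2 (div_le_one_of_le₀ (by linarith) (by positivity))), hs']
  · rintro y ⟨hy, hy'⟩
    rw [mem_closedBall, dist_comm] at hy
    rw [mem_closedBall] at hy'
    have := dist_triangle x y z
    exact eq_lineMap_of_dist_eq_mul_of_dist_eq_mul (hr'.trans (by linarith)).symm
      (hs'.trans (by linarith)).symm

section InnerProduct

variable {F : Type*} [NormedAddCommGroup F] [InnerProductSpace ℝ F] {u x : F} {r c : ℝ}

theorem existsUnique_mem_closedBall_and_inner_le (hu : ‖u‖ = 1) (hr : 0 ≤ r)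
    (hc : inner ℝ u x - r = c) : ∃! p, p ∈ closedBall x r ∧ inner ℝ u p ≤ c := by
  subst hc
  refine ⟨x - r • u, ⟨?_, ?_⟩, ?_⟩
  · rw [mem_closedBall, dist_eq_norm, sub_sub_cancel_left, norm_neg, norm_smul, hu, mul_one,
      Real.norm_of_nonneg hr]
  · rw [inner_sub_right, real_inner_smul_right, real_inner_self_eq_norm_sq, hu]; simp
  · rintro p ⟨hp, hpu⟩
    rw [mem_closedBall, dist_eq_norm] at hp
    have hpu' : inner ℝ u (p - x) ≤ -r := by rw [inner_sub_right]; linarith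
    -- `‖p - x + r u‖² = ‖p - x‖² + 2 r ⟪u, p - x⟫ + r² ≤ r² - 2 r² + r²`
    have hsq : ‖p - x + r • u‖ ^ 2 ≤ 0 := by
      rw [norm_add_sq_real, norm_smul, hu, real_inner_smul_right, real_inner_comm,
        Real.norm_of_nonneg hr]
      nlinarith [norm_nonneg (p - x)]
    have : p - x + r • u = 0 := norm_eq_zero.1 (by nlinarith [norm_nonneg (p - x + r • u)])
    rw [eq_sub_iff_add_eq, ← sub_eq_zero, ← this]; abel

theorem closedBall_inter_setOf_inner_le_eq_empty (hu : ‖u‖ = 1) (hc : c < inner ℝ u x - r) :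
    closedBall x r ∩ {p | inner ℝ u p ≤ c} = ∅ := by
  refine Set.eq_empty_of_forall_notMem fun p ⟨hp, (hpu : inner ℝ u p ≤ c)⟩ => ?_
  rw [mem_closedBall, dist_eq_norm'] at hp
  have := real_inner_le_norm u (x - p)
  rw [inner_sub_right, hu, one_mul] at this
  linarith

end InnerProduct

theorem Set.Subsingleton.disjoint_interior {X : Type*} [TopologicalSpace X]
    [∀ x : X, (𝓝[≠] x).NeBot] {s t : Set X} (h : (s ∩ t).Subsingleton) :
    Disjoint (interior s) (interior t) := by
  rw [Set.disjoint_iff_inter_eq_empty, ← interior_inter]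
  obtain h | ⟨x, hx⟩ := h.eq_empty_or_singleton
  · rw [h, interior_empty]
  · rw [hx, interior_singleton]

lemma Set.subsingleton_inter_of_existsUnique {α : Type*} {s t : Set α}
    (h : ∃! p, p ∈ s ∧ p ∈ t) : (s ∩ t).Subsingleton :=
  fun _ hx _ hy => h.unique hx hy

section Packing

open EuclideanSpace

variable {κ : ℝ}

lemma inner_single_one (p : EuclideanSpace ℝ (Fin 2)) : inner ℝ (single 1 1) p = p 1 := by
  simp [inner_single_left]

lemma dx_eq : dx = {p | inner ℝ (single 1 1 : EuclideanSpace ℝ (Fin 2)) p ≤ -1} := by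
  simp only [dx, inner_single_one]

lemma dm1_eq : dm1 = {p | inner ℝ (-single 1 1 : EuclideanSpace ℝ (Fin 2)) p ≤ -1} := by
  simp only [dm1, inner_neg_left, inner_single_one, neg_le_neg_iff]

lemma dx_inter_dm1 : dx ∩ dm1 = ∅ :=
  Set.eq_empty_of_forall_notMem fun p ⟨(hx : p 1 ≤ -1), (hm1 : 1 ≤ p 1)⟩ => by linarith

lemma existsUnique_mem_closedBall_and_mem_dx (a : ℝ) {b r : ℝ} (hr : 0 ≤ r) (hb : b + 1 = r) :
    ∃! p, p ∈ closedBall (WithLp.toLp 2 ![a, b] : EuclideanSpace ℝ (Fin 2)) r ∧ p ∈ dx := by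
  rw [dx_eq]
  exact existsUnique_mem_closedBall_and_inner_le (by simp) hr
    (by rw [inner_single_one]; change b - r = -1; linarith)

lemma existsUnique_mem_closedBall_and_mem_dm1 (a : ℝ) {b r : ℝ} (hr : 0 ≤ r) (hb : b + r = 1) :
    ∃! p, p ∈ closedBall (WithLp.toLp 2 ![a, b] : EuclideanSpace ℝ (Fin 2)) r ∧ p ∈ dm1 := by
  rw [dm1_eq]
  exact existsUnique_mem_closedBall_and_inner_le (by simp) hr
    (by rw [inner_neg_left, inner_single_one]; change -b - r = -1; linarith)

lemma d1_inter_dm1 (hκ : 1 < κ) : d1 κ ∩ dm1 = ∅ := by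
  rw [dm1_eq]
  refine closedBall_inter_setOf_inner_le_eq_empty (by simp) ?_
  rw [inner_neg_left, inner_single_one]
  change -1 < -(1 / κ - 1) - 1 / κ
  linarith [(div_lt_one (by linarith)).2 hκ]

lemma dist_toLp_toLp (a b c d : ℝ) :
    dist (WithLp.toLp 2 ![a, b] : EuclideanSpace ℝ (Fin 2)) (WithLp.toLp 2 ![c, d]) =
      √((a - c) ^ 2 + (b - d) ^ 2) := by
  simp [EuclideanSpace.dist_eq, Fin.sum_univ_two, Real.dist_eq, sq_abs]

lemma dist_center_d1 (hκ : 0 ≤ κ) {a : ℝ} (ha : a ^ 2 = 4 / κ) :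
    dist (WithLp.toLp 2 ![0, 1 / κ - 1] : EuclideanSpace ℝ (Fin 2)) (WithLp.toLp 2 ![a, 0]) =
      1 / κ + 1 := by
  rw [dist_toLp_toLp, ← Real.sqrt_sq (by positivity : 0 ≤ 1 / κ + 1)]
  congr 1
  rw [zero_sub, neg_sq, ha]
  ring

lemma sq_two_div_sqrt (hκ : 0 ≤ κ) : (2 / √κ) ^ 2 = 4 / κ := by
  rw [div_pow, Real.sq_sqrt hκ]; norm_num

lemma existsUnique_mem_d1_and_mem_d2 (hκ : 0 ≤ κ) : ∃! p, p ∈ d1 κ ∧ p ∈ d2 κ :=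
  existsUnique_mem_closedBall_and_mem_closedBall_of_dist_eq_add (by positivity) zero_le_one
    (dist_center_d1 hκ (sq_two_div_sqrt hκ))

lemma existsUnique_mem_d1_and_mem_dm2 (hκ : 0 ≤ κ) : ∃! p, p ∈ d1 κ ∧ p ∈ dm2 κ :=
  existsUnique_mem_closedBall_and_mem_closedBall_of_dist_eq_add (by positivity) zero_le_one
    (dist_center_d1 hκ (by rw [neg_sq, sq_two_div_sqrt hκ]))

lemma d2_inter_dm2 (hκ : 0 < κ) (hκ4 : κ < 4) : d2 κ ∩ dm2 κ = ∅ := by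
  rw [← Set.disjoint_iff_inter_eq_empty]
  refine closedBall_disjoint_closedBall ?_
  rw [dist_toLp_toLp, Real.lt_sqrt (by norm_num),
    show (2 / √κ - -(2 / √κ)) ^ 2 + (0 - 0) ^ 2 = 4 * (2 / √κ) ^ 2 by ring, sq_two_div_sqrt hκ.le,
    mul_div_assoc', lt_div_iff₀ hκ]
  linarith

end Packing

/-- For `1 < κ < 4`, the five sets of the standard pyramidal disk packing have
pairwise disjoint interiors; `d₁` meets each of `d_x, d₂, d₋₂` in exactly one
point, `d₂` meets each of `d_x, d₋₁` in exactly one point, `d₋₂` meets each of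
`d_x, d₋₁` in exactly one point, and `d₁ ∩ d₋₁ = ∅`, `d₂ ∩ d₋₂ = ∅`,
`d_x ∩ d₋₁ = ∅`: the sets form a disk packing with tangency graph `⊠`. -/
theorem pyramidal_disk_packing_in_plane (κ : ℝ) (hκ1 : 1 < κ) (hκ4 : κ < 4) :
    (Pairwise fun i j =>
      Disjoint (interior (packing κ i)) (interior (packing κ j))) ∧
    (∃! p, p ∈ d1 κ ∧ p ∈ dx) ∧
    (∃! p, p ∈ d1 κ ∧ p ∈ d2 κ) ∧
    (∃! p, p ∈ d1 κ ∧ p ∈ dm2 κ) ∧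
    (∃! p, p ∈ d2 κ ∧ p ∈ dx) ∧
    (∃! p, p ∈ d2 κ ∧ p ∈ dm1) ∧
    (∃! p, p ∈ dm2 κ ∧ p ∈ dx) ∧
    (∃! p, p ∈ dm2 κ ∧ p ∈ dm1) ∧
    d1 κ ∩ dm1 = ∅ ∧
    d2 κ ∩ dm2 κ = ∅ ∧
    dx ∩ dm1 = ∅ := by
  have hκ : 0 < κ := by linarith
  have h1x : ∃! p, p ∈ d1 κ ∧ p ∈ dx :=
    existsUnique_mem_closedBall_and_mem_dx 0 (by positivity) (sub_add_cancel _ _)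
  have h2x : ∃! p, p ∈ d2 κ ∧ p ∈ dx :=
    existsUnique_mem_closedBall_and_mem_dx _ zero_le_one (zero_add 1)
  have h2m1 : ∃! p, p ∈ d2 κ ∧ p ∈ dm1 :=
    existsUnique_mem_closedBall_and_mem_dm1 _ zero_le_one (zero_add 1)
  have hm2x : ∃! p, p ∈ dm2 κ ∧ p ∈ dx :=
    existsUnique_mem_closedBall_and_mem_dx _ zero_le_one (zero_add 1)
  have hm2m1 : ∃! p, p ∈ dm2 κ ∧ p ∈ dm1 :=
    existsUnique_mem_closedBall_and_mem_dm1 _ zero_le_one (zero_add 1)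
  have h12 := existsUnique_mem_d1_and_mem_d2 hκ.le
  have h1m2 := existsUnique_mem_d1_and_mem_dm2 hκ.le
  have h1m1 := d1_inter_dm1 hκ1
  have h2m2 := d2_inter_dm2 hκ hκ4
  have hxm1 := dx_inter_dm1
  refine ⟨(pairwise_disjoint_on fun i => interior (packing κ i)).2 fun i j hij => ?_,
    h1x, h12, h1m2, h2x, h2m1, hm2x, hm2m1, h1m1, h2m2, hxm1⟩
  apply Set.Subsingleton.disjoint_interior
  fin_cases i <;> fin_cases j <;>
    first
    | exact absurd hij (by decide)
    | exact Set.subsingleton_inter_of_existsUnique ‹_›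
    | exact Set.inter_comm _ _ ▸ Set.subsingleton_inter_of_existsUnique ‹_›
    | exact Set.subsingleton_empty.anti (subset_of_eq (by assumption))
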